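/- arXiv:1302.5736 — 2 statements merged into one kernel-verified Lean document; each statement's English description precedes it below -/
import Mathlib

section
/- In the monoid M_{abel,m} (m ≥ 2), the set of minimal common right multiples of {a, b} is {a^m, ab} (i.e., mcm({a,b}) = {a·b, a^m} where a^m = b^m), each element of which divides every common multiple minimally: a^m and ab are common multiples of a and b, they are distinct, and every common multiple of a and b is divisible by a^m or by ab. -/
/-- The congruence on `ℕ²` generated by `(m,0) ∼ (0,m)`. -/
def abelRel (m : ℕ) : ℕ × ℕ → ℕ × ℕ → Prop :=
  fun p q => p = (m, 0) ∧ q = (0, m)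

/-- `M_{abel,m} = ⟨a,b | aᵐ = bᵐ, ab = ba⟩` as a quotient of `ℕ²`. -/
def MAbel (m : ℕ) := (addConGen (abelRel m)).Quotient

instance (m : ℕ) : AddCommMonoid (MAbel m) :=
  inferInstanceAs (AddCommMonoid (addConGen (abelRel m)).Quotient)

/-- The generator `a` of `M_{abel,m}`. -/
def MAbel.a (m : ℕ) : MAbel m := (addConGen (abelRel m)).mk' (1, 0)

/-- The generator `b` of `M_{abel,m}`. -/
def MAbel.b (m : ℕ) : MAbel m := (addConGen (abelRel m)).mk' (0, 1)

/-- `u` divides `v` in `M_{abel,m}`. -/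
def MAbel.Dvd (m : ℕ) (u v : MAbel m) : Prop := ∃ x : MAbel m, v = u + x


/-!
Total length and the number of letters `a` modulo `m` are additive invariants of words
respecting `aᵐ = bᵐ`, so they descend to `M_{abel,m}`; they separate `aᵐ` from `ab`.
A common multiple `a + x` of `a` and `b` is divisible by `ab` unless `x` is a power of `a`;
then `a + x = aⁿ` is divisible by `b`, and the invariants force `m ≤ n`.
-/

namespace MAbel

variable {m : ℕ}

def mk (m : ℕ) : ℕ × ℕ →+ MAbel m := (addConGen (abelRel m)).mk'

theorem mk_surjective : Function.Surjective (mk m) := AddCon.mk'_surjective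

theorem a_eq_mk : a m = mk m (1, 0) := rfl

theorem b_eq_mk : b m = mk m (0, 1) := rfl

theorem mk_m_zero_eq : mk m (m, 0) = mk m (0, m) :=
  (AddCon.eq _).2 <| AddConGen.Rel.of _ _ ⟨rfl, rfl⟩

theorem nsmul_a (n : ℕ) : n • a m = mk m (n, 0) := by
  rw [a_eq_mk, ← map_nsmul]; simp

theorem nsmul_b (n : ℕ) : n • b m = mk m (0, n) := by
  rw [b_eq_mk, ← map_nsmul]; simp

theorem a_add_b : a m + b m = mk m (1, 1) := (map_add (mk m) (1, 0) (0, 1)).symm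

theorem nsmul_a_eq_nsmul_b : m • a m = m • b m := by
  rw [nsmul_a, nsmul_b, mk_m_zero_eq]

def lift {M : Type*} [AddMonoid M] (f : ℕ × ℕ →+ M) (hf : f (m, 0) = f (0, m)) :
    MAbel m →+ M :=
  AddCon.lift _ f <| AddCon.addConGen_le.2 <| by rintro _ _ ⟨rfl, rfl⟩; exact hf

def length (m : ℕ) : MAbel m →+ ℕ :=
  lift (AddMonoidHom.fst ℕ ℕ + AddMonoidHom.snd ℕ ℕ) (by simp)

def aCount (m : ℕ) : MAbel m →+ ZMod m :=
  lift ((Nat.castAddMonoidHom (ZMod m)).comp (AddMonoidHom.fst ℕ ℕ)) (by simp)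

@[simp]
theorem length_mk (p : ℕ × ℕ) : length m (mk m p) = p.1 + p.2 := rfl

@[simp]
theorem aCount_mk (p : ℕ × ℕ) : aCount m (mk m p) = p.1 := rfl

theorem nsmul_a_ne_a_add_b : m • a m ≠ a m + b m := by
  rw [nsmul_a, a_add_b]
  intro h
  have hm : m = 2 := by simpa using congrArg (length m) h
  subst hm
  exact absurd (congrArg (aCount 2) h) (by decide)

theorem exists_eq_nsmul_a_or_b_dvd (x : MAbel m) :
    (∃ n : ℕ, x = n • a m) ∨ MAbel.Dvd m (b m) x := by
  obtain ⟨⟨r, _ | s⟩, rfl⟩ := mk_surjective x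
  · exact .inl ⟨r, (nsmul_a r).symm⟩
  · refine .inr ⟨mk m (r, s), ?_⟩
    rw [b_eq_mk, ← map_add]
    congr 1
    ext <;> simp only [Prod.fst_add, Prod.snd_add] <;> omega

/-- Writing `n • a = b + y`, comparing `length` and `aCount` shows that `m` divides the
number of letters `b` in `y`, plus one. -/
theorem le_of_b_dvd_nsmul_a {n : ℕ} (h : MAbel.Dvd m (b m) (n • a m)) : m ≤ n := by
  obtain ⟨y, hy⟩ := h
  obtain ⟨⟨r, s⟩, rfl⟩ := mk_surjective y
  rw [nsmul_a, b_eq_mk, ← map_add] at hy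
  have hlen : n = r + (s + 1) := by simpa [add_comm] using congrArg (length m) hy
  have hcount : ((s + 1 : ℕ) : ZMod m) = 0 := by
    simpa [hlen] using congrArg (aCount m) hy
  have := Nat.le_of_dvd s.succ_pos ((ZMod.natCast_eq_zero_iff _ _).1 hcount)
  omega

end MAbel

open MAbel in
/-- `mcm({a,b}) = {aᵐ, ab}` in `M_{abel,m}`: both are common multiples of `a`
and `b`, they are distinct, and every common multiple of `a` and `b` is
divisible by `aᵐ` or by `ab`. -/
theorem stmt_7 (m : ℕ) (hm : 2 ≤ m) :
    (MAbel.Dvd m (MAbel.a m) (m • MAbel.a m) ∧ MAbel.Dvd m (MAbel.b m) (m • MAbel.a m)) ∧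
    (MAbel.Dvd m (MAbel.a m) (MAbel.a m + MAbel.b m) ∧
      MAbel.Dvd m (MAbel.b m) (MAbel.a m + MAbel.b m)) ∧
    m • MAbel.a m = m • MAbel.b m ∧
    m • MAbel.a m ≠ MAbel.a m + MAbel.b m ∧
    (∀ u : MAbel m, MAbel.Dvd m (MAbel.a m) u → MAbel.Dvd m (MAbel.b m) u →
      MAbel.Dvd m (m • MAbel.a m) u ∨ MAbel.Dvd m (MAbel.a m + MAbel.b m) u) := by
  obtain ⟨k, rfl⟩ : ∃ k, m = k + 1 := ⟨m - 1, by omega⟩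
  refine ⟨⟨⟨k • a _, succ_nsmul' _ _⟩, ⟨k • b _, ?_⟩⟩,
    ⟨⟨b _, rfl⟩, ⟨a _, add_comm _ _⟩⟩, nsmul_a_eq_nsmul_b, nsmul_a_ne_a_add_b, ?_⟩
  · rw [nsmul_a_eq_nsmul_b, succ_nsmul']
  rintro _ ⟨x, rfl⟩ hb
  rcases exists_eq_nsmul_a_or_b_dvd x with ⟨n, rfl⟩ | ⟨y, rfl⟩
  · rw [← succ_nsmul'] at hb ⊢
    refine .inl ⟨(n + 1 - (k + 1)) • a _, ?_⟩
    rw [← add_nsmul, Nat.add_sub_cancel' (le_of_b_dvd_nsmul_a hb)]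
  · exact .inr ⟨y, (add_assoc _ _ _).symm⟩
end

section
/- In the monoid G⁺_{B_ii} = ⟨a,b,c | cbb = bba, ab = bc, ac = ca⟩_mo, for natural numbers i < j, if cⁱb·X = cʲb·Y then there exist a natural number k and a positive word Z with X = cᵏb·a^{j-i}·Z and Y = cᵏb·Z. -/
/-!
`G⁺_{B_ii}` embeds into the monoid of pairs `(n, w)` with `n : ℕ` and `w : ZMod 3 → ℕ`,
multiplied by `(n, w) * (m, v) = (n + m, r ↦ w r + v (r - n))`, via `b ↦ (1, 0)`,
`c ↦ (0, δ₀)`, `a ↦ (0, δ₁)`. The relations hold in this model, and every element of `G⁺_{B_ii}`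
equals one of the words `c^p a^q`, `c^p b c^q a^r`, `c^p b c^q b c^r b^m`, whose exponents are
read off from its image; so the map is injective, with image the pairs such that `w 2 = 0`
whenever `n = 0`. In the model, `cⁱb·X = cʲb·Y` becomes four linear equations between the
coordinates of `X` and `Y`. Since `i < j` they force `X` out of `n = 0`, and the coordinates of
`Z` can be solved for.
-/

namespace Bii

/-- Letters `a`, `b`, `c` of the free monoid on three letters. -/
def A : FreeMonoid (Fin 3) := FreeMonoid.of 0
def B : FreeMonoid (Fin 3) := FreeMonoid.of 1
def C : FreeMonoid (Fin 3) := FreeMonoid.of 2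

/-- The defining relations `cbb = bba`, `ab = bc`, `ac = ca` of `G⁺_{B_ii}`. -/
def rel : FreeMonoid (Fin 3) → FreeMonoid (Fin 3) → Prop := fun u v =>
  (u = C * B * B ∧ v = B * B * A) ∨ (u = A * B ∧ v = B * C) ∨ (u = A * C ∧ v = C * A)

/-- The monoid `G⁺_{B_ii}`. -/
def GBii := (conGen rel).Quotient

instance : Monoid GBii := inferInstanceAs (Monoid (conGen rel).Quotient)

/-- Generators of `G⁺_{B_ii}`. -/
def a : GBii := (conGen rel).mk' A
def b : GBii := (conGen rel).mk' B
def c : GBii := (conGen rel).mk' C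

lemma mk'_eq_of_rel {u v : FreeMonoid (Fin 3)} (h : rel u v) :
    (conGen rel).mk' u = (conGen rel).mk' v :=
  (Con.eq _).2 (ConGen.Rel.of _ _ h)

lemma c_mul_b_mul_b : c * b * b = b * b * a := mk'_eq_of_rel (Or.inl ⟨rfl, rfl⟩)
lemma a_mul_b : a * b = b * c := mk'_eq_of_rel (Or.inr (Or.inl ⟨rfl, rfl⟩))
lemma commute_a_c : Commute a c := mk'_eq_of_rel (Or.inr (Or.inr ⟨rfl, rfl⟩))

lemma b_mul_c_pow (k : ℕ) : b * c ^ k = a ^ k * b :=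
  SemiconjBy.pow_right (x := c) (y := a) a_mul_b.symm k

lemma c_pow_mul_b_mul_c_pow_mul_b (m p : ℕ) :
    c ^ m * b * c ^ p * b = b * c ^ p * b * a ^ m := by
  simp only [mul_assoc (c ^ m)]
  have h : c * (b * c ^ p * b) = b * c ^ p * b * a := calc
    c * (b * c ^ p * b) = a ^ p * (c * b * b) := by
      rw [b_mul_c_pow, ← mul_assoc, ← mul_assoc, ← (commute_a_c.pow_left p).eq]
      simp only [mul_assoc]
    _ = b * c ^ p * b * a := by rw [c_mul_b_mul_b, b_mul_c_pow]; simp only [mul_assoc]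
  exact (SemiconjBy.pow_right (a := b * c ^ p * b) h.symm m).symm

theorem GBii.induction_on {p : GBii → Prop} (x : GBii) (one : p 1)
    (mul_a : ∀ x, p x → p (a * x)) (mul_b : ∀ x, p x → p (b * x))
    (mul_c : ∀ x, p x → p (c * x)) : p x := by
  obtain ⟨w, rfl⟩ := (conGen rel).mk'_surjective x
  induction w using FreeMonoid.inductionOn' with
  | one => exact one
  | of_mul g w ih =>
    change p ((conGen rel).mk' (FreeMonoid.of g) * (conGen rel).mk' w)
    fin_cases g
    exacts [mul_a _ ih, mul_b _ ih, mul_c _ ih]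

@[ext] structure Model where
  deg : ℕ
  wt : ZMod 3 → ℕ

namespace Model

instance : Mul Model := ⟨fun x y => ⟨x.deg + y.deg, fun r => x.wt r + y.wt (r - x.deg)⟩⟩
instance : One Model := ⟨⟨0, 0⟩⟩

@[simp] lemma mul_deg (x y : Model) : (x * y).deg = x.deg + y.deg := rfl
@[simp] lemma mul_wt (x y : Model) (r : ZMod 3) :
    (x * y).wt r = x.wt r + y.wt (r - x.deg) := rfl
@[simp] lemma one_deg : (1 : Model).deg = 0 := rfl
@[simp] lemma one_wt : (1 : Model).wt = 0 := rfl

instance : Monoid Model where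
  mul_assoc x y z := by ext <;> simp [add_assoc, sub_sub]
  one_mul x := by ext <;> simp
  mul_one x := by ext <;> simp

lemma ext_iff_wt {x y : Model} :
    x = y ↔ x.deg = y.deg ∧ x.wt 0 = y.wt 0 ∧ x.wt 1 = y.wt 1 ∧ x.wt 2 = y.wt 2 := by
  have zmod_three : ∀ r : ZMod 3, r = 0 ∨ r = 1 ∨ r = 2 := by decide
  refine ⟨by rintro rfl; simp, fun ⟨h, h0, h1, h2⟩ => Model.ext h (funext fun r => ?_)⟩
  rcases zmod_three r with rfl | rfl | rfl <;> assumption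

def a : Model := ⟨0, Pi.single 1 1⟩
def b : Model := ⟨1, 0⟩
def c : Model := ⟨0, Pi.single 0 1⟩

@[simp] lemma b_deg : b.deg = 1 := rfl
@[simp] lemma b_wt : b.wt = 0 := rfl

lemma a_mul (t : Model) : a * t = ⟨t.deg, t.wt + Pi.single 1 1⟩ := by ext <;> simp [a, add_comm]
lemma b_mul (t : Model) : b * t = ⟨t.deg + 1, fun r => t.wt (r - 1)⟩ := by
  ext <;> simp [b, add_comm]
lemma c_mul (t : Model) : c * t = ⟨t.deg, t.wt + Pi.single 0 1⟩ := by ext <;> simp [c, add_comm]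

lemma a_pow (k : ℕ) : a ^ k = ⟨0, Pi.single 1 k⟩ := by
  induction k with
  | zero => ext <;> simp
  | succ k ih => rw [pow_succ', a_mul, ih, ← Pi.single_add]
lemma b_pow (k : ℕ) : b ^ k = ⟨k, 0⟩ := by
  induction k with
  | zero => rfl
  | succ k ih => rw [pow_succ', b_mul, ih]; rfl
lemma c_pow (k : ℕ) : c ^ k = ⟨0, Pi.single 0 k⟩ := by
  induction k with
  | zero => ext <;> simp
  | succ k ih => rw [pow_succ', c_mul, ih, ← Pi.single_add]

def admissible : Submonoid Model where
  carrier := {t | t.deg = 0 → t.wt 2 = 0}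
  one_mem' _ := rfl
  mul_mem' {x y} hx hy h := by
    obtain ⟨hx0, hy0⟩ := Nat.add_eq_zero_iff.1 h
    simp [hx0, hx hx0, hy hy0]

lemma mem_admissible {t : Model} : t ∈ admissible ↔ (t.deg = 0 → t.wt 2 = 0) := Iff.rfl

lemma a_mem_admissible : a ∈ admissible := fun _ => rfl
lemma b_mem_admissible : b ∈ admissible := fun h => absurd h one_ne_zero
lemma c_mem_admissible : c ∈ admissible := fun _ => rfl

end Model

def toModel : GBii →* Model :=
  Con.lift _ (FreeMonoid.lift ![Model.a, Model.b, Model.c]) <| Con.conGen_le.2 <| by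
    rintro u v (⟨rfl, rfl⟩ | ⟨rfl, rfl⟩ | ⟨rfl, rfl⟩) <;>
    · simp only [Con.ker_rel, A, B, C, map_mul, FreeMonoid.lift_eval_of]
      simp +decide [Model.ext_iff_wt, Model.a, Model.b, Model.c]

@[simp] lemma toModel_a : toModel a = Model.a := rfl
@[simp] lemma toModel_b : toModel b = Model.b := rfl
@[simp] lemma toModel_c : toModel c = Model.c := rfl

lemma toModel_mem_admissible (x : GBii) : toModel x ∈ Model.admissible := by
  induction x using GBii.induction_on with
  | one => exact Model.admissible.one_mem
  | mul_a x hx => rw [map_mul]; exact mul_mem Model.a_mem_admissible hx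
  | mul_b x hx => rw [map_mul]; exact mul_mem Model.b_mem_admissible hx
  | mul_c x hx => rw [map_mul]; exact mul_mem Model.c_mem_admissible hx

def ofModel : Model → GBii
  | ⟨0, w⟩ => c ^ w 0 * a ^ w 1
  | ⟨1, w⟩ => c ^ w 0 * b * c ^ w 1 * a ^ w 2
  | ⟨m + 2, w⟩ => c ^ w 0 * b * c ^ w 1 * b * c ^ w 2 * b ^ m

lemma a_mul_ofModel (t : Model) : a * ofModel t = ofModel (Model.a * t) := by
  rw [Model.a_mul]
  rcases t with ⟨_ | _ | m, w⟩ <;>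
    simp +decide only [ofModel, Pi.add_apply, Pi.single_apply, ↓reduceIte, add_zero,
      ← mul_assoc] <;>
    rw [(commute_a_c.pow_right _).eq]
  · rw [mul_assoc, ← pow_succ']
  all_goals rw [mul_assoc (c ^ _) a b, a_mul_b, pow_succ']; simp only [mul_assoc]

lemma c_mul_ofModel (t : Model) : c * ofModel t = ofModel (Model.c * t) := by
  rw [Model.c_mul]
  rcases t with ⟨_ | _ | m, w⟩ <;> simp +decide [ofModel, ← mul_assoc, pow_succ']

lemma b_mul_ofModel {t : Model} (ht : t ∈ Model.admissible) :
    b * ofModel t = ofModel (Model.b * t) := by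
  rw [Model.b_mul]
  rcases t with ⟨_ | _ | m, w⟩ <;> simp only [ofModel] <;> reduce_mod_char
  · rw [show w 2 = 0 from Model.mem_admissible.1 ht rfl, pow_zero, one_mul, mul_assoc]
  · calc b * (c ^ w 0 * b * c ^ w 1 * a ^ w 2) = b * c ^ w 0 * b * (a ^ w 2 * c ^ w 1) := by
          rw [(commute_a_c.pow_pow _ _).eq]; simp only [mul_assoc]
      _ = c ^ w 2 * b * c ^ w 0 * b * c ^ w 1 * b ^ 0 := by
          rw [← mul_assoc, ← c_pow_mul_b_mul_c_pow_mul_b, pow_zero, mul_one]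
  · calc b * (c ^ w 0 * b * c ^ w 1 * b * c ^ w 2 * b ^ m)
        = b * c ^ w 0 * b * (c ^ w 1 * (b * c ^ w 2)) * b ^ m := by simp only [mul_assoc]
      _ = b * c ^ w 0 * b * a ^ w 2 * (c ^ w 1 * b) * b ^ m := by
          rw [b_mul_c_pow (w 2), ← mul_assoc (c ^ w 1), ← (commute_a_c.pow_pow _ _).eq]
          simp only [mul_assoc]
      _ = c ^ w 2 * b * c ^ w 0 * b * c ^ w 1 * b ^ (m + 1) := by
          rw [← c_pow_mul_b_mul_c_pow_mul_b, pow_succ']; simp only [mul_assoc]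

lemma ofModel_toModel (x : GBii) : ofModel (toModel x) = x := by
  induction x using GBii.induction_on with
  | one => simp [ofModel]
  | mul_a x ih => rw [map_mul, toModel_a, ← a_mul_ofModel, ih]
  | mul_b x ih => rw [map_mul, toModel_b, ← b_mul_ofModel (toModel_mem_admissible x), ih]
  | mul_c x ih => rw [map_mul, toModel_c, ← c_mul_ofModel, ih]

lemma toModel_injective : Function.Injective toModel :=
  Function.LeftInverse.injective ofModel_toModel

lemma toModel_ofModel {t : Model} (ht : t ∈ Model.admissible) : toModel (ofModel t) = t := by
  rcases t with ⟨_ | _ | m, w⟩ <;>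
    simp +decide [ofModel, Model.ext_iff_wt, Model.a_pow, Model.b_pow, Model.c_pow] <;>
    reduce_mod_char
  · exact (Model.mem_admissible.1 ht rfl).symm
  · exact Pi.single_eq_same _ _
  · omega

namespace Model

theorem exists_eq_of_c_pow_mul_b_mul_eq {i j : ℕ} (hij : i < j) {x y : Model}
    (hx : x ∈ admissible) (hy : y ∈ admissible) (h : c ^ i * b * x = c ^ j * b * y) :
    ∃ k, ∃ z ∈ admissible, x = c ^ k * b * a ^ (j - i) * z ∧ y = c ^ k * b * z := by
  simp +decide [ext_iff_wt, c_pow] at h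
  reduce_mod_char at h
  obtain ⟨hdeg, h0, h1, h2⟩ := h
  have hdeg_ne : x.deg ≠ 0 := fun hx0 => by
    have := hx hx0
    have := hy (hdeg ▸ hx0)
    omega
  refine ⟨x.wt 0, ⟨x.deg - 1, Pi.single 0 (x.wt 1) + Pi.single 1 (y.wt 2)⟩, ?_, ?_, ?_⟩
  · intro _
    simp +decide
  all_goals
    simp +decide [ext_iff_wt, a_pow, c_pow]
    reduce_mod_char
    simp only [Pi.single_eq_same, and_true]
    omega

end Model

/-- Lemma 5.2: if `bb·X = c·Y` in `G⁺_{B_ii}`, then `X = a·Z` and `Y = bb·Z`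
for some `Z`. -/
theorem stmt_16 (i j : ℕ) (hij : i < j) (X Y : GBii)
    (h : c ^ i * b * X = c ^ j * b * Y) :
    ∃ (k : ℕ) (Z : GBii), X = c ^ k * b * a ^ (j - i) * Z ∧ Y = c ^ k * b * Z := by
  have h_model : Model.c ^ i * Model.b * toModel X = Model.c ^ j * Model.b * toModel Y := by
    simpa using congrArg toModel h
  obtain ⟨k, z, hz, hX, hY⟩ := Model.exists_eq_of_c_pow_mul_b_mul_eq hij
    (toModel_mem_admissible X) (toModel_mem_admissible Y) h_model
  refine ⟨k, ofModel z, toModel_injective ?_, toModel_injective ?_⟩ <;>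
    simpa [toModel_ofModel hz]

end Bii
end
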